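/- arXiv:2510.23913 — 2 statements merged into one kernel-verified Lean document; each statement's English description precedes it below -/
import Mathlib

section
/- For any n×n real matrix A and any natural number m, tr(A^(2m)) ≤ tr((A·Aᵀ)^m). -/
/-!
Encode words in `A` and `Aᵀ` as lists of booleans (`true` for `A`) and fix a word of length
`2m` whose product has maximal trace. If `u ++ v` is maximal and `u`, `v` have equal length,
Cauchy–Schwarz for the Frobenius inner product gives `tr(u v)² ≤ tr(u uᵀ) · tr(vᵀ v)`. Both
factors are traces of words of length `2m`, nonnegative and at most the maximum, so the folded
word `u uᵀ` is maximal too. Since the trace is invariant under cyclic rotation, rotating a folded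
word by one letter and folding again keeps it maximal and lengthens the alternating tail of its
first half by one letter. After `m` steps the maximal word alternates between `A` and `Aᵀ`, so
its trace is `tr((A Aᵀ)^m)`, and it dominates the word `A^(2m)`.
-/

open Matrix

namespace Matrix

variable {m n R : Type*} [Fintype m] [Fintype n]

theorem trace_pow_mul_comm [DecidableEq n] [CommSemiring R] (X Y : Matrix n n R) (k : ℕ) :
    trace ((X * Y) ^ k) = trace ((Y * X) ^ k) := by
  cases k with
  | zero => rfl
  | succ k =>
    rw [pow_succ, ← mul_assoc, mul_pow_mul, mul_assoc, trace_mul_comm, mul_assoc, ← pow_succ]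

variable [CommRing R] [LinearOrder R] [IsStrictOrderedRing R]

theorem trace_mul_transpose_self_nonneg (X : Matrix m n R) : 0 ≤ trace (X * Xᵀ) :=
  Finset.sum_nonneg fun _ _ => Finset.sum_nonneg fun _ _ => mul_self_nonneg _

theorem sq_trace_mul_le (X : Matrix m n R) (Y : Matrix n m R) :
    trace (X * Y) ^ 2 ≤ trace (X * Xᵀ) * trace (Yᵀ * Y) := by
  have h := Finset.sum_mul_sq_le_sq_mul_sq Finset.univ
    (fun p : m × n => X p.1 p.2) (fun p => Y p.2 p.1)
  simp only [Fintype.sum_prod_type] at h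
  simpa [trace, mul_apply, sq] using h

end Matrix

namespace MatrixWord

def mirror (w : List Bool) : List Bool := (w.map not).reverse

@[simp]
theorem length_mirror (w : List Bool) : (mirror w).length = w.length := by simp [mirror]

theorem mirror_append (u v : List Bool) : mirror (u ++ v) = mirror v ++ mirror u := by
  simp [mirror]

theorem head?_mirror (w : List Bool) : (mirror w).head? = w.getLast?.map not := by
  simp [mirror, List.head?_reverse, List.getLast?_map]

theorem isChain_append_mirror {w : List Bool} (hw : w.IsChain (· ≠ ·)) :
    (w ++ mirror w).IsChain (· ≠ ·) := by
  refine List.isChain_append.2 ⟨hw, ?_, fun x hx y hy => ?_⟩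
  · simpa [mirror, List.isChain_reverse, List.isChain_map, ne_comm] using hw
  · rw [head?_mirror, hx] at hy
    cases x <;> simp_all

theorem isChain_append_singleton_of_mirror_eq_cons {p q r : List Bool} {b : Bool}
    (hq : q.IsChain (· ≠ ·)) (hb : mirror (p ++ q) = b :: r) :
    (q ++ [b]).IsChain (· ≠ ·) := by
  refine List.isChain_append.2 ⟨hq, .singleton b, fun x hx y hy => ?_⟩
  have hlast := head?_mirror (p ++ q)
  rw [hb, List.getLast?_append, hx] at hlast
  simp only [List.head?_cons, Option.some_or, Option.map_some, Option.some.injEq] at hlast hy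
  cases x <;> simp_all

variable {ι R : Type*}

def letter (A : Matrix ι ι R) (b : Bool) : Matrix ι ι R := if b then A else Aᵀ

theorem letter_not (A : Matrix ι ι R) (b : Bool) : letter A (!b) = (letter A b)ᵀ := by
  cases b <;> simp [letter]

variable [Fintype ι] [DecidableEq ι] [CommRing R]

def eval (A : Matrix ι ι R) (w : List Bool) : Matrix ι ι R := (w.map (letter A)).prod

variable (A : Matrix ι ι R)

@[simp]
theorem eval_nil : eval A [] = 1 := rfl

@[simp]
theorem eval_cons (b : Bool) (w : List Bool) : eval A (b :: w) = letter A b * eval A w := by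
  simp [eval]

theorem eval_append (u v : List Bool) : eval A (u ++ v) = eval A u * eval A v := by
  simp [eval]

theorem eval_mirror (w : List Bool) : eval A (mirror w) = (eval A w)ᵀ := by
  induction w with
  | nil => simp [mirror]
  | cons b w ih =>
    rw [← List.singleton_append, mirror_append, eval_append, ih, eval_append]
    simp [mirror, letter_not]

theorem eval_replicate_true (k : ℕ) : eval A (List.replicate k true) = A ^ k := by
  simp [eval, letter]

theorem trace_eval_append_comm (u v : List Bool) :
    trace (eval A (u ++ v)) = trace (eval A (v ++ u)) := by
  rw [eval_append, eval_append, trace_mul_comm]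

theorem eval_eq_pow_of_isChain (b : Bool) {k : ℕ} :
    ∀ {w : List Bool}, w.length = 2 * k → ((!b) :: w).IsChain (· ≠ ·) →
      eval A w = (letter A b * (letter A b)ᵀ) ^ k := by
  induction k with
  | zero => simp
  | succ k ih =>
    rintro (_ | ⟨c, _ | ⟨d, w⟩⟩) hlen hchain
    · simp at hlen
    · simp at hlen
      omega
    · obtain ⟨hbc, hcd, hw⟩ : (!b) ≠ c ∧ c ≠ d ∧ (d :: w).IsChain (· ≠ ·) := by
        simpa using hchain
      obtain rfl : c = b := by cases b <;> cases c <;> simp_all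
      obtain rfl : d = !c := by cases c <;> cases d <;> simp_all
      rw [eval_cons, eval_cons, ih (by simp at hlen; omega) hw, letter_not, pow_succ',
        mul_assoc]

theorem trace_eval_of_isChain {k : ℕ} {w : List Bool} (hlen : w.length = 2 * k)
    (hw : w.IsChain (· ≠ ·)) : trace (eval A w) = trace ((A * Aᵀ) ^ k) := by
  cases w with
  | nil =>
    obtain rfl : k = 0 := by simpa using hlen
    simp
  | cons b w =>
    rw [eval_eq_pow_of_isChain A b hlen (List.isChain_cons_cons.2 ⟨by cases b <;> decide, hw⟩)]
    cases b
    · simp [letter, trace_pow_mul_comm]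
    · simp [letter]

variable [LinearOrder R] {A}

variable (A) in
def IsTraceMaximal (w : List Bool) : Prop :=
  ∀ v : List Bool, v.length = w.length → trace (eval A v) ≤ trace (eval A w)

variable (A) in
theorem exists_isTraceMaximal (k : ℕ) : ∃ w : List Bool, w.length = k ∧ IsTraceMaximal A w := by
  obtain ⟨w, hw, hmax⟩ := Set.exists_max_image {w : List Bool | w.length = k}
    (fun w => trace (eval A w)) (List.finite_length_eq Bool k) ⟨List.replicate k true, by simp⟩
  exact ⟨w, hw, fun v hv => hmax v (hv.trans hw)⟩

theorem IsTraceMaximal.append_comm {u v : List Bool} (h : IsTraceMaximal A (u ++ v)) :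
    IsTraceMaximal A (v ++ u) := by
  intro w hw
  rw [trace_eval_append_comm A v]
  exact h w (by simpa [add_comm] using hw)

variable [IsStrictOrderedRing R]

theorem IsTraceMaximal.append_mirror {u v : List Bool} (h : IsTraceMaximal A (u ++ v))
    (huv : u.length = v.length) : IsTraceMaximal A (u ++ mirror u) := by
  have hu : trace (eval A (u ++ mirror u)) ≤ trace (eval A (u ++ v)) := h _ (by simp [huv])
  have hv : trace (eval A (mirror v ++ v)) ≤ trace (eval A (u ++ v)) := h _ (by simp [huv])
  have hu₀ : 0 ≤ trace (eval A (u ++ mirror u)) := by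
    rw [eval_append, eval_mirror]
    exact trace_mul_transpose_self_nonneg _
  have hv₀ : 0 ≤ trace (eval A (mirror v ++ v)) := by
    rw [eval_append, eval_mirror, trace_mul_comm]
    exact trace_mul_transpose_self_nonneg _
  have hcs : trace (eval A (u ++ v)) ^ 2 ≤
      trace (eval A (u ++ mirror u)) * trace (eval A (mirror v ++ v)) := by
    rw [eval_append, eval_append, eval_append, eval_mirror, eval_mirror]
    exact sq_trace_mul_le _ _
  intro w hw
  refine (h w (by simpa [huv] using hw)).trans ?_
  nlinarith

theorem IsTraceMaximal.rotate_append_mirror {a b : Bool} {t r : List Bool}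
    (h : IsTraceMaximal A ((a :: t) ++ mirror (a :: t))) (hb : mirror (a :: t) = b :: r) :
    IsTraceMaximal A ((t ++ [b]) ++ mirror (t ++ [b])) := by
  have hlen : r.length = t.length := by simpa using congrArg List.length hb.symm
  have hsplit : IsTraceMaximal A ([a] ++ (t ++ b :: r)) := by simpa [hb] using h
  have hrot : IsTraceMaximal A ((t ++ [b]) ++ (r ++ [a])) := by simpa using hsplit.append_comm
  exact hrot.append_mirror (by simp [hlen])

theorem IsTraceMaximal.exists_isChain_suffix {v : List Bool}
    (h : IsTraceMaximal A (v ++ mirror v)) {k : ℕ} (hk : k ≤ v.length) :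
    ∃ p q : List Bool, (p ++ q).length = v.length ∧ k ≤ q.length ∧
      q.IsChain (· ≠ ·) ∧ IsTraceMaximal A ((p ++ q) ++ mirror (p ++ q)) := by
  induction k with
  | zero => exact ⟨v, [], by simp, le_rfl, .nil, by simpa using h⟩
  | succ k ih =>
    obtain ⟨p, q, hlen, hkq, hq, hpq⟩ := ih (by omega)
    rcases hkq.lt_or_eq with hkq | rfl
    · exact ⟨p, q, hlen, hkq, hq, hpq⟩
    obtain ⟨a, p, rfl⟩ := List.exists_cons_of_length_pos (l := p) (by simp at hlen; omega)
    obtain ⟨b, r, hbr⟩ :=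
      List.exists_cons_of_ne_nil (l := mirror (a :: p ++ q)) (by simp [mirror])
    refine ⟨p, q ++ [b], by simp at hlen ⊢; omega, by simp,
      isChain_append_singleton_of_mirror_eq_cons hq hbr, ?_⟩
    have hcons : IsTraceMaximal A ((a :: (p ++ q)) ++ mirror (a :: (p ++ q))) := by
      simpa using hpq
    simpa using hcons.rotate_append_mirror hbr

variable (A) in
theorem exists_isChain_isTraceMaximal (k : ℕ) :
    ∃ v : List Bool, v.length = k ∧ v.IsChain (· ≠ ·) ∧ IsTraceMaximal A (v ++ mirror v) := by
  obtain ⟨w, hw, hmax⟩ := exists_isTraceMaximal A (2 * k)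
  rw [← List.take_append_drop k w] at hmax
  have hfold := hmax.append_mirror (by simp [hw]; omega)
  obtain ⟨p, q, hlen, hq, hchain, hpq⟩ :=
    hfold.exists_isChain_suffix (k := k) (by simp [hw]; omega)
  obtain rfl : p = [] := List.eq_nil_of_length_eq_zero (by simp at hlen; omega)
  exact ⟨q, by simp [hw] at hlen; omega, hchain, by simpa using hpq⟩

end MatrixWord

open MatrixWord

theorem trace_pow_le_trace_mul_transpose_pow {n : ℕ} (A : Matrix (Fin n) (Fin n) ℝ)
    (m : ℕ) :
    Matrix.trace (A ^ (2 * m)) ≤ Matrix.trace ((A * Aᵀ) ^ m) := by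
  obtain ⟨v, hv, hchain, hmax⟩ := exists_isChain_isTraceMaximal A m
  have hlen : (v ++ mirror v).length = 2 * m := by simp [hv]; ring
  calc trace (A ^ (2 * m)) = trace (eval A (List.replicate (2 * m) true)) := by
        rw [eval_replicate_true]
    _ ≤ trace (eval A (v ++ mirror v)) := hmax _ (by simp [hlen])
    _ = trace ((A * Aᵀ) ^ m) := trace_eval_of_isChain A hlen (isChain_append_mirror hchain)
end

section
/- Let G and H be graphs on the same vertex set with vertex measure μ. If H embeds in G with congestion c and H is a (φ, μ)-expander, then G is a (2φ/c, μ)-expander. -/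
open Finset

variable {V : Type*} [Fintype V] [DecidableEq V]

/-- Total weight of edges from `S` to `T` in a weighted graph `G`. -/
def cutWeight (G : V → V → ℝ) (S T : Finset V) : ℝ := ∑ u ∈ S, ∑ v ∈ T, G u v

/-- `μ`-measure of a vertex set. -/
def muMeasure (μ : V → ℝ) (S : Finset V) : ℝ := ∑ v ∈ S, μ v

/-- `G` is a `(φ, μ)`-expander: every cut has `μ`-expansion at least `φ`. -/
def IsExpander (G : V → V → ℝ) (μ : V → ℝ) (φ : ℝ) : Prop :=
  ∀ S : Finset V, φ * min (muMeasure μ S) (muMeasure μ Sᶜ) ≤ cutWeight G S Sᶜ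

/-- `H` embeds in `G` with congestion `c`. -/
def Embeds (H G : V → V → ℝ) (c : ℝ) : Prop :=
  ∃ f : V → V → V → ℝ,
    (∀ com u v, 0 ≤ f com u v) ∧
    (∀ com u v, G u v = 0 → f com u v = 0) ∧
    (∀ com x, (∑ v, f com x v) - (∑ v, f com v x) =
      (if x = com then ∑ v, H com v else 0) - H com x) ∧
    (∀ u v, (∑ com, (f com u v + f com v u)) ≤ c * G u v)

/-- Summing divergences over a set gives the net flow across its boundary. -/
lemma net_flow (g : V → V → ℝ) (S : Finset V) :
    ∑ x ∈ S, ((∑ v, g x v) - (∑ v, g v x))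
      = (∑ x ∈ S, ∑ v ∈ Sᶜ, g x v) - ∑ x ∈ S, ∑ v ∈ Sᶜ, g v x := by
  have h1 : ∀ x : V, (∑ v, g x v) = ∑ v ∈ S, g x v + ∑ v ∈ Sᶜ, g x v :=
    fun x => (Finset.sum_add_sum_compl S _).symm
  have h2 : ∀ x : V, (∑ v, g v x) = ∑ v ∈ S, g v x + ∑ v ∈ Sᶜ, g v x :=
    fun x => (Finset.sum_add_sum_compl S _).symm
  have hcomm : ∑ x ∈ S, ∑ v ∈ S, g x v = ∑ x ∈ S, ∑ v ∈ S, g v x := Finset.sum_comm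
  simp_rw [h1, h2]
  rw [Finset.sum_sub_distrib, Finset.sum_add_distrib, Finset.sum_add_distrib]
  linarith

/-- The flow crossing a cut dominates the demand crossing it. -/
lemma cross_flow (H _G : V → V → ℝ) (_c : ℝ) (f : V → V → V → ℝ)
    (hfnn : ∀ com u v, 0 ≤ f com u v)
    (hcons : ∀ com x, (∑ v, f com x v) - (∑ v, f com v x) =
      (if x = com then ∑ v, H com v else 0) - H com x)
    (S : Finset V) (com : V) (hcom : com ∈ S) :
    ∑ v ∈ Sᶜ, H com v ≤ ∑ u ∈ S, ∑ v ∈ Sᶜ, f com u v := by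
  have hsum : ∑ x ∈ S, ((∑ v, f com x v) - (∑ v, f com v x))
      = ∑ x ∈ S, ((if x = com then ∑ v, H com v else 0) - H com x) :=
    Finset.sum_congr rfl fun x _ => hcons com x
  rw [net_flow] at hsum
  rw [Finset.sum_sub_distrib, Finset.sum_ite_eq' S com (fun _ => ∑ v, H com v)] at hsum
  simp only [hcom, if_true] at hsum
  have hT : (∑ v, H com v) - ∑ x ∈ S, H com x = ∑ v ∈ Sᶜ, H com v := by
    rw [← Finset.sum_add_sum_compl S (H com)]; ring
  have hback : 0 ≤ ∑ x ∈ S, ∑ v ∈ Sᶜ, f com v x :=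
    Finset.sum_nonneg fun x _ => Finset.sum_nonneg fun v _ => hfnn com v x
  linarith [hsum, hT]

/-- If `H` embeds in `G` with congestion `c` and `H` is a `(φ,μ)`-expander,
then `G` is a `(2φ/c, μ)`-expander. -/
theorem expander_of_embeds (G H : V → V → ℝ) (μ : V → ℝ)
    (φ c : ℝ) (hc : 0 < c) (hφ : 0 ≤ φ)
    (hGsymm : ∀ u v, G u v = G v u) (hHsymm : ∀ u v, H u v = H v u)
    (hGnn : ∀ u v, 0 ≤ G u v) (hHnn : ∀ u v, 0 ≤ H u v) (hμ : ∀ v, 0 ≤ μ v)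
    (hemb : Embeds H G c) (hexp : IsExpander H μ φ) :
    IsExpander G μ (2 * φ / c) := by
  obtain ⟨f, hfnn, -, hcons, hcap⟩ := hemb
  intro S
  -- demand crossing in direction S → Sᶜ, commodities in S
  have key1 : cutWeight H S Sᶜ ≤ ∑ com ∈ S, ∑ u ∈ S, ∑ v ∈ Sᶜ, f com u v :=
    Finset.sum_le_sum fun com hcom => cross_flow H G c f hfnn hcons S com hcom
  -- commodities in Sᶜ, crossing Sᶜ → S
  have key2 : cutWeight H Sᶜ S ≤ ∑ com ∈ Sᶜ, ∑ u ∈ Sᶜ, ∑ v ∈ S, f com u v := by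
    have := fun com (hcom : com ∈ Sᶜ) => cross_flow H G c f hfnn hcons Sᶜ com hcom
    simp only [compl_compl] at this
    exact Finset.sum_le_sum this
  have hHcut : cutWeight H Sᶜ S = cutWeight H S Sᶜ := by
    unfold cutWeight
    rw [Finset.sum_comm]
    exact Finset.sum_congr rfl fun u _ => Finset.sum_congr rfl fun v _ => hHsymm v u
  -- bound commodity sums by full sums
  have b1 : ∑ com ∈ S, ∑ u ∈ S, ∑ v ∈ Sᶜ, f com u v
      ≤ ∑ u ∈ S, ∑ v ∈ Sᶜ, ∑ com, f com u v := by
    rw [Finset.sum_comm]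
    refine Finset.sum_le_sum fun u _ => ?_
    rw [Finset.sum_comm]
    refine Finset.sum_le_sum fun v _ => ?_
    exact Finset.sum_le_sum_of_subset_of_nonneg (Finset.subset_univ S)
      fun com _ _ => hfnn com u v
  have b2 : ∑ com ∈ Sᶜ, ∑ u ∈ Sᶜ, ∑ v ∈ S, f com u v
      ≤ ∑ u ∈ S, ∑ v ∈ Sᶜ, ∑ com, f com v u := by
    have e : ∑ com ∈ Sᶜ, ∑ u ∈ Sᶜ, ∑ v ∈ S, f com u v
        = ∑ u ∈ S, ∑ v ∈ Sᶜ, ∑ com ∈ Sᶜ, f com v u :=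
      calc ∑ com ∈ Sᶜ, ∑ u ∈ Sᶜ, ∑ v ∈ S, f com u v
          = ∑ com ∈ Sᶜ, ∑ v ∈ S, ∑ u ∈ Sᶜ, f com u v :=
            Finset.sum_congr rfl fun _ _ => Finset.sum_comm
        _ = ∑ v ∈ S, ∑ com ∈ Sᶜ, ∑ u ∈ Sᶜ, f com u v := Finset.sum_comm
        _ = ∑ v ∈ S, ∑ u ∈ Sᶜ, ∑ com ∈ Sᶜ, f com u v :=
            Finset.sum_congr rfl fun _ _ => Finset.sum_comm
    rw [e]
    refine Finset.sum_le_sum fun u _ => Finset.sum_le_sum fun v _ => ?_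
    exact Finset.sum_le_sum_of_subset_of_nonneg (Finset.subset_univ Sᶜ)
      fun com _ _ => hfnn com v u
  have bcap : ∑ u ∈ S, ∑ v ∈ Sᶜ, ∑ com, (f com u v + f com v u)
      ≤ c * cutWeight G S Sᶜ := by
    unfold cutWeight
    rw [Finset.mul_sum]
    refine Finset.sum_le_sum fun u _ => ?_
    rw [Finset.mul_sum]
    exact Finset.sum_le_sum fun v _ => hcap u v
  have split : ∑ u ∈ S, ∑ v ∈ Sᶜ, ∑ com, (f com u v + f com v u)
      = (∑ u ∈ S, ∑ v ∈ Sᶜ, ∑ com, f com u v)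
        + ∑ u ∈ S, ∑ v ∈ Sᶜ, ∑ com, f com v u := by
    simp [Finset.sum_add_distrib]
  have hHexp : φ * min (muMeasure μ S) (muMeasure μ Sᶜ) ≤ cutWeight H S Sᶜ := hexp S
  have main : 2 * (φ * min (muMeasure μ S) (muMeasure μ Sᶜ)) ≤ c * cutWeight G S Sᶜ := by
    linarith
  rw [div_mul_eq_mul_div, div_le_iff₀ hc]
  nlinarith [main]
end
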